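/- arXiv:cs/0007021 — 5 statements merged into one kernel-verified Lean document; each statement's English description precedes it below -/
import Mathlib

section
/- In Push-1, a 2×2 cluster of blocks is permanently frozen: if (B, r) is a Push-1 configuration and c ∈ ℤ² is a cell such that all four cells c, c+(1,0), c+(0,1), c+(1,1) lie in B, then for every configuration (B′, r′) reachable from (B, r), all four cells c, c+(1,0), c+(0,1), c+(1,1) still lie in B′. -/
/-- A cell of the integer lattice ℤ². -/
abbrev Cell := ℤ × ℤ

/-- The four unit directions. -/
def IsDir (d : Cell) : Prop :=
  d = (1, 0) ∨ d = (-1, 0) ∨ d = (0, 1) ∨ d = (0, -1)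

/-- One move of the Push-1 game: the robot steps into an empty cell, or
pushes a single block one square into an empty cell. -/
def Push1Step (c c' : Finset Cell × Cell) : Prop :=
  ∃ d : Cell, IsDir d ∧
    ((c.2 + d ∉ c.1 ∧ c' = (c.1, c.2 + d)) ∨
     (c.2 + d ∈ c.1 ∧ c.2 + d + d ∉ c.1 ∧
       c' = (insert (c.2 + d + d) (c.1.erase (c.2 + d)), c.2 + d)))

/-- Reachability between Push-1 configurations. -/
def Push1Reaches : Finset Cell × Cell → Finset Cell × Cell → Prop :=
  Relation.ReflTransGen Push1Step

/-- A cell `p` is reachable from a configuration if the robot can come to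
occupy `p` after some finite sequence of moves. -/
def Push1ReachesCell (c : Finset Cell × Cell) (p : Cell) : Prop :=
  ∃ B', Push1Reaches c (B', p)

/-- Every cell of a 2x2 cluster has a cluster neighbour in direction `d` or `-d`. -/
lemma push1_cluster_nb (d x c : Cell)
    (hd : IsDir d)
    (hx : x = c ∨ x = c + (1, 0) ∨ x = c + (0, 1) ∨ x = c + (1, 1)) :
    (x + d = c ∨ x + d = c + (1, 0) ∨ x + d = c + (0, 1) ∨ x + d = c + (1, 1))
      ∨ (x - d = c ∨ x - d = c + (1, 0) ∨ x - d = c + (0, 1) ∨ x - d = c + (1, 1)) := by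
  obtain ⟨d1, d2⟩ := d
  obtain ⟨x1, x2⟩ := x
  obtain ⟨c1, c2⟩ := c
  simp only [IsDir, Prod.mk_add_mk, Prod.mk_sub_mk, Prod.mk.injEq] at hd hx ⊢
  rcases hd with ⟨rfl, rfl⟩ | ⟨rfl, rfl⟩ | ⟨rfl, rfl⟩ | ⟨rfl, rfl⟩ <;>
    rcases hx with ⟨rfl, rfl⟩ | ⟨rfl, rfl⟩ | ⟨rfl, rfl⟩ | ⟨rfl, rfl⟩ <;> omega

/-- a 2×2 cluster of blocks is permanently frozen in Push-1. -/
theorem push1_frozen_2x2 (B : Finset Cell) (r c : Cell) (hr : r ∉ B)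
    (h1 : c ∈ B) (h2 : c + (1, 0) ∈ B) (h3 : c + (0, 1) ∈ B) (h4 : c + (1, 1) ∈ B) :
    ∀ B' r', Push1Reaches (B, r) (B', r') →
      c ∈ B' ∧ c + (1, 0) ∈ B' ∧ c + (0, 1) ∈ B' ∧ c + (1, 1) ∈ B' := by
  -- cluster predicate
  suffices H : ∀ s s' : Finset Cell × Cell, Push1Reaches s s' →
      (s.2 ∉ s.1 ∧ c ∈ s.1 ∧ c + (1, 0) ∈ s.1 ∧ c + (0, 1) ∈ s.1 ∧ c + (1, 1) ∈ s.1) →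
      (s'.2 ∉ s'.1 ∧ c ∈ s'.1 ∧ c + (1, 0) ∈ s'.1 ∧ c + (0, 1) ∈ s'.1 ∧ c + (1, 1) ∈ s'.1) by
    intro B' r' hreach
    have := H (B, r) (B', r') hreach ⟨hr, h1, h2, h3, h4⟩
    exact ⟨this.2.1, this.2.2.1, this.2.2.2.1, this.2.2.2.2⟩
  intro s s' hreach
  induction hreach with
  | refl => exact id
  | tail _ hstep ih =>
    intro hinv
    have ⟨hr', h1', h2', h3', h4'⟩ := ih hinv
    obtain ⟨d, hd, hcase⟩ := hstep
    rename_i b bs _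
    rcases hcase with ⟨hni, he⟩ | ⟨hin, hout, he⟩
    · subst he; exact ⟨hni, h1', h2', h3', h4'⟩
    · subst he
      -- the pushed block b.2 + d is not a cluster cell
      have hcl : ∀ x : Cell,
          (x = c ∨ x = c + (1, 0) ∨ x = c + (0, 1) ∨ x = c + (1, 1)) →
          b.2 + d ≠ x := by
        intro x hx hxe
        -- x has a neighbor in the cluster in direction d and -d considerations
        have nb := push1_cluster_nb d x c hd hx
        have hmem : ∀ y : Cell,
            (y = c ∨ y = c + (1, 0) ∨ y = c + (0, 1) ∨ y = c + (1, 1)) → y ∈ b.1 := by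
          rintro y (rfl | rfl | rfl | rfl) <;> assumption
        rcases nb with h | h
        · apply hout
          have : x + d = b.2 + d + d := by rw [hxe]
          rw [← this]
          exact hmem _ h
        · apply hr'
          have : x - d = b.2 := by rw [← hxe, add_sub_cancel_right]
          rw [← this]
          exact hmem _ h
      have hdz : d ≠ 0 := by
        rcases hd with rfl | rfl | rfl | rfl <;> simp [Prod.ext_iff]
      have hd0 : b.2 + d ≠ b.2 + d + d := fun h => hdz (left_eq_add.mp h)
      refine ⟨?_, ?_, ?_, ?_, ?_⟩
      · simp only [Finset.mem_insert, Finset.mem_erase]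
        rintro (h | ⟨hne, _⟩)
        · exact hd0 h
        · exact hne rfl
      all_goals
        simp only [Finset.mem_insert, Finset.mem_erase]
      · exact Or.inr ⟨Ne.symm (hcl c (Or.inl rfl)), h1'⟩
      · exact Or.inr ⟨Ne.symm (hcl _ (Or.inr (Or.inl rfl))), h2'⟩
      · exact Or.inr ⟨Ne.symm (hcl _ (Or.inr (Or.inr (Or.inl rfl)))), h3'⟩
      · exact Or.inr ⟨Ne.symm (hcl _ (Or.inr (Or.inr (Or.inr rfl)))), h4'⟩
end

section
/- In PushPush, a 2×2 cluster of blocks is permanently frozen: if (B, r) is a PushPush configuration and c ∈ ℤ² is a cell such that all four cells c, c+(1,0), c+(0,1), c+(1,1) lie in B, then for every configuration (B′, r′) reachable from (B, r), all four cells c, c+(1,0), c+(0,1), c+(1,1) still lie in B′. -/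
/-- One move of the PushPush game: the robot steps into an empty cell, or
pushes a single block, which then slides maximally until it hits the next
block (at distance `k`), stopping at `r + (k-1)•d`. -/
def PushPushStep (c c' : Finset Cell × Cell) : Prop :=
  ∃ d : Cell, IsDir d ∧
    ((c.2 + d ∉ c.1 ∧ c' = (c.1, c.2 + d)) ∨
     (c.2 + d ∈ c.1 ∧ c.2 + d + d ∉ c.1 ∧
       ∃ k : ℕ, 2 ≤ k ∧ c.2 + k • d ∈ c.1 ∧
         (∀ j : ℕ, 2 ≤ j → j < k → c.2 + j • d ∉ c.1) ∧
         c' = (insert (c.2 + (k - 1) • d) (c.1.erase (c.2 + d)), c.2 + d)))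

/-- Reachability between PushPush configurations. -/
def PushPushReaches : Finset Cell × Cell → Finset Cell × Cell → Prop :=
  Relation.ReflTransGen PushPushStep

/-- A cell `p` is reachable from a configuration if the robot can come to
occupy `p` after some finite sequence of moves. -/
def PushPushReachesCell (c : Finset Cell × Cell) (p : Cell) : Prop :=
  ∃ B', PushPushReaches c (B', p)

/-- a 2×2 cluster of blocks is permanently frozen in PushPush. -/
theorem pushpush_frozen_2x2 (B : Finset Cell) (r c : Cell) (hr : r ∉ B)
    (h1 : c ∈ B) (h2 : c + (1, 0) ∈ B) (h3 : c + (0, 1) ∈ B) (h4 : c + (1, 1) ∈ B) :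
    ∀ B' r', PushPushReaches (B, r) (B', r') →
      c ∈ B' ∧ c + (1, 0) ∈ B' ∧ c + (0, 1) ∈ B' ∧ c + (1, 1) ∈ B' := by
  -- invariant: the four cells are blocks and the robot is not on a block
  set Inv : Finset Cell × Cell → Prop := fun s =>
    c ∈ s.1 ∧ c + (1, 0) ∈ s.1 ∧ c + (0, 1) ∈ s.1 ∧ c + (1, 1) ∈ s.1 ∧ s.2 ∉ s.1
    with hInv
  have key : ∀ s t : Finset Cell × Cell, PushPushStep s t → Inv s → Inv t := by
    rintro s t ⟨d, hd, hcase⟩ ⟨i1, i2, i3, i4, i5⟩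
    rcases hcase with ⟨hne, rfl⟩ | ⟨hin, hout, k, hk2, hkin, hmin, rfl⟩
    · exact ⟨i1, i2, i3, i4, hne⟩
    · -- helpers showing a cluster cell cannot be the pushed block
      have push1 : ∀ x y : Cell, y ∈ s.1 → x + d = y → x ≠ s.2 + d := by
        intro x y hy he hx
        exact hout (by rw [← hx, he]; exact hy)
      have push2 : ∀ x y : Cell, y ∈ s.1 → y + d = x → x ≠ s.2 + d := by
        intro x y hy he hx
        have hys : y = s.2 := add_right_cancel (he.trans hx)
        exact i5 (hys ▸ hy)
      have hk3 : 3 ≤ k := by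
        rcases Nat.lt_or_ge k 3 with h | h
        · interval_cases k
          · exact absurd (by rwa [two_nsmul, ← add_assoc] at hkin) hout
        · exact h
      have hc1 : c ≠ s.2 + d := by
        rcases hd with rfl | rfl | rfl | rfl
        · exact push1 c (c + (1, 0)) i2 rfl
        · exact push2 c (c + (1, 0)) i2 (by simp [Prod.ext_iff])
        · exact push1 c (c + (0, 1)) i3 rfl
        · exact push2 c (c + (0, 1)) i3 (by simp [Prod.ext_iff])
      have hc2 : c + (1, 0) ≠ s.2 + d := by
        rcases hd with rfl | rfl | rfl | rfl
        · exact push2 _ c i1 rfl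
        · exact push1 _ c i1 (by simp [Prod.ext_iff])
        · exact push1 _ (c + (1, 1)) i4 (by simp [Prod.ext_iff])
        · exact push2 _ (c + (1, 1)) i4 (by simp [Prod.ext_iff])
      have hc3 : c + (0, 1) ≠ s.2 + d := by
        rcases hd with rfl | rfl | rfl | rfl
        · exact push1 _ (c + (1, 1)) i4 (by simp [Prod.ext_iff])
        · exact push2 _ (c + (1, 1)) i4 (by simp [Prod.ext_iff])
        · exact push2 _ c i1 rfl
        · exact push1 _ c i1 (by simp [Prod.ext_iff])
      have hc4 : c + (1, 1) ≠ s.2 + d := by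
        rcases hd with rfl | rfl | rfl | rfl
        · exact push2 _ (c + (0, 1)) i3 (by simp [Prod.ext_iff])
        · exact push1 _ (c + (0, 1)) i3 (by simp [Prod.ext_iff])
        · exact push2 _ (c + (1, 0)) i2 (by simp [Prod.ext_iff])
        · exact push1 _ (c + (1, 0)) i2 (by simp [Prod.ext_iff])
      have hrnew : s.2 + d ∉ insert (s.2 + (k - 1) • d) (s.1.erase (s.2 + d)) := by
        intro h
        rcases Finset.mem_insert.mp h with h | h
        · have : d = (k - 1) • d := add_left_cancel h
          rcases hd with rfl | rfl | rfl | rfl <;>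
            · rw [Prod.ext_iff] at this
              simp [Prod.smul_mk] at this
              omega
        · exact (Finset.mem_erase.mp h).1 rfl
      refine ⟨?_, ?_, ?_, ?_, hrnew⟩ <;>
        exact Finset.mem_insert_of_mem (Finset.mem_erase.mpr ⟨by assumption, by assumption⟩)
  have main : ∀ t, PushPushReaches (B, r) t → Inv t := by
    intro t h
    induction h with
    | refl => exact ⟨h1, h2, h3, h4, hr⟩
    | tail _ hstep ih => exact key _ _ hstep ih
  intro B' r' h
  obtain ⟨j1, j2, j3, j4, _⟩ := main (B', r') h
  exact ⟨j1, j2, j3, j4⟩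
end

section
/- One-Way gadget becomes two-way after forward traversal: there exists a finite Push-1 configuration with block set B and two designated cells a, b ∉ B such that a is not reachable from (B, b), yet there exists a configuration (B′, b) reachable from (B, a) such that a is reachable from (B′, b). -/
/-- The rigid wall: a thickness-2 annulus around the origin with a
one-cell-wide tunnel `(1,0),(2,0)` carved out. -/
def WallS : Finset Cell :=
  {(1,1),(0,1),(-1,1),(-1,0),(-1,-1),(0,-1),(1,-1),
   (2,-2),(2,-1),(2,1),(2,2),(1,2),(0,2),(-1,2),(-2,2),(-2,1),(-2,0),
   (-2,-1),(-2,-2),(-1,-2),(0,-2),(1,-2)}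

/-- Every wall block has, on each axis, a neighbour in the wall. -/
lemma wallS_rigid : ∀ x ∈ WallS,
    (x + ((1:ℤ),(0:ℤ)) ∈ WallS ∨ x + ((-1:ℤ),(0:ℤ)) ∈ WallS) ∧
    (x + ((0:ℤ),(1:ℤ)) ∈ WallS ∨ x + ((0:ℤ),(-1:ℤ)) ∈ WallS) := by
  decide

/-- The invariant for configurations reachable from outside: robot off blocks,
wall intact, robot not at the origin, and the door blocks either the tunnel
mouth `(1,0)` or the origin itself. -/
def DoorInv (c : Finset Cell × Cell) : Prop :=
  c.2 ∉ c.1 ∧ WallS ⊆ c.1 ∧ c.2 ≠ ((0:ℤ),(0:ℤ)) ∧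
    (((1:ℤ),(0:ℤ)) ∈ c.1 ∨ ((0:ℤ),(0:ℤ)) ∈ c.1)

lemma doorInv_step {c c' : Finset Cell × Cell} (h : Push1Step c c') (hI : DoorInv c) :
    DoorInv c' := by
  obtain ⟨B, r⟩ := c
  obtain ⟨hrB, hS, hr0, hdoor⟩ := hI
  obtain ⟨d, hd, hcase⟩ := h
  obtain ⟨x, y⟩ := r
  simp only at hrB hS hr0 hdoor hcase ⊢
  have hm1 : ((-1:ℤ),(0:ℤ)) ∈ B := hS (by decide)
  have hm2 : ((0:ℤ),(1:ℤ)) ∈ B := hS (by decide)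
  have hm3 : ((0:ℤ),(-1:ℤ)) ∈ B := hS (by decide)
  have hm4 : ((1:ℤ),(1:ℤ)) ∈ B := hS (by decide)
  have hm5 : ((1:ℤ),(-1:ℤ)) ∈ B := hS (by decide)
  rcases hcase with ⟨hne, rfl⟩ | ⟨hin, hout, rfl⟩
  · -- simple move
    refine ⟨hne, hS, ?_, hdoor⟩
    intro h0
    rcases hd with rfl | rfl | rfl | rfl <;>
      simp only [Prod.mk_add_mk, Prod.mk.injEq] at h0 <;>
      obtain ⟨hx, hy⟩ := h0
    · refine hrB ?_
      have hx' : x = -1 := by omega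
      have hy' : y = 0 := by omega
      subst hx'; subst hy'; exact hm1
    · rcases hdoor with h1 | h1
      · refine hrB ?_
        have hx' : x = 1 := by omega
        have hy' : y = 0 := by omega
        subst hx'; subst hy'; exact h1
      · refine hne ?_
        simp only [Prod.mk_add_mk]
        rw [show x + -1 = 0 by omega, show y + 0 = 0 by omega]
        exact h1
    · refine hrB ?_
      have hx' : x = 0 := by omega
      have hy' : y = -1 := by omega
      subst hx'; subst hy'; exact hm3
    · refine hrB ?_
      have hx' : x = 0 := by omega
      have hy' : y = 1 := by omega
      subst hx'; subst hy'; exact hm2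
  · -- push move
    -- first: the pushed block cannot be a wall block
    have hpw : ((x:ℤ), (y:ℤ)) + d ∉ WallS := by
      intro hw
      have hrig := wallS_rigid _ hw
      rcases hd with rfl | rfl | rfl | rfl
      · rcases hrig.1 with h | h
        · refine hout ?_
          have := hS h
          simpa [Prod.mk_add_mk, add_assoc] using this
        · refine hrB ?_
          have := hS h
          simpa [Prod.mk_add_mk, show x + 1 + -1 = x by omega,
            show y + 0 + 0 = y by omega] using this
      · rcases hrig.1 with h | h
        · refine hrB ?_
          have := hS h
          simpa [Prod.mk_add_mk, show x + -1 + 1 = x by omega,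
            show y + 0 + 0 = y by omega] using this
        · refine hout ?_
          have := hS h
          simpa [Prod.mk_add_mk, add_assoc] using this
      · rcases hrig.2 with h | h
        · refine hout ?_
          have := hS h
          simpa [Prod.mk_add_mk, add_assoc] using this
        · refine hrB ?_
          have := hS h
          simpa [Prod.mk_add_mk, show x + 0 + 0 = x by omega,
            show y + 1 + -1 = y by omega] using this
      · rcases hrig.2 with h | h
        · refine hrB ?_
          have := hS h
          simpa [Prod.mk_add_mk, show x + 0 + 0 = x by omega,
            show y + -1 + 1 = y by omega] using this
        · refine hout ?_
          have := hS h
          simpa [Prod.mk_add_mk, add_assoc] using this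
    -- the robot's new position is not the origin
    have hp0 : ((x:ℤ), (y:ℤ)) + d ≠ ((0:ℤ),(0:ℤ)) := by
      intro h0
      rcases hd with rfl | rfl | rfl | rfl <;>
        simp only [Prod.mk_add_mk, Prod.mk.injEq] at h0 <;>
        obtain ⟨hx, hy⟩ := h0
      · refine hrB ?_
        have hx' : x = -1 := by omega
        have hy' : y = 0 := by omega
        subst hx'; subst hy'; exact hm1
      · refine hout ?_
        simp only [Prod.mk_add_mk]
        rw [show x + -1 + -1 = -1 by omega, show y + 0 + 0 = 0 by omega]
        exact hm1
      · refine hrB ?_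
        have hx' : x = 0 := by omega
        have hy' : y = -1 := by omega
        subst hx'; subst hy'; exact hm3
      · refine hrB ?_
        have hx' : x = 0 := by omega
        have hy' : y = 1 := by omega
        subst hx'; subst hy'; exact hm2
    refine ⟨?_, ?_, hp0, ?_⟩
    · -- robot not on a block
      simp only [Finset.mem_insert, Finset.mem_erase]
      rintro (h | ⟨h, -⟩)
      · exact hout (h ▸ hin)
      · exact h rfl
    · -- wall intact
      intro z hz
      by_cases hzp : z = ((x:ℤ), (y:ℤ)) + d
      · exact absurd (hzp ▸ hz) hpw
      · exact Finset.mem_insert_of_mem (Finset.mem_erase.mpr ⟨hzp, hS hz⟩)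
    · -- door still blocks
      rcases hdoor with h1 | h1
      · by_cases hp : ((x:ℤ), (y:ℤ)) + d = ((1:ℤ),(0:ℤ))
        · rcases hd with rfl | rfl | rfl | rfl <;>
            simp only [Prod.mk_add_mk, Prod.mk.injEq] at hp <;>
            obtain ⟨hx, hy⟩ := hp
          · exfalso
            refine hr0 ?_
            have hx' : x = 0 := by omega
            have hy' : y = 0 := by omega
            subst hx'; subst hy'; rfl
          · right
            refine Finset.mem_insert.mpr (Or.inl ?_)
            simp only [Prod.mk_add_mk]
            rw [show x + -1 + -1 = 0 by omega, show y + 0 + 0 = 0 by omega]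
          · exfalso
            refine hrB ?_
            have hx' : x = 1 := by omega
            have hy' : y = -1 := by omega
            subst hx'; subst hy'; exact hm5
          · exfalso
            refine hrB ?_
            have hx' : x = 1 := by omega
            have hy' : y = 1 := by omega
            subst hx'; subst hy'; exact hm4
        · exact Or.inl (Finset.mem_insert_of_mem (Finset.mem_erase.mpr
            ⟨fun h => hp h.symm, h1⟩))
      · exact Or.inr (Finset.mem_insert_of_mem (Finset.mem_erase.mpr
          ⟨fun h => hp0 h.symm, h1⟩))

lemma doorInv_reaches {c c' : Finset Cell × Cell} (h : Push1Reaches c c')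
    (hI : DoorInv c) : DoorInv c' := by
  induction h with
  | refl => exact hI
  | tail _ hs ih => exact doorInv_step hs ih

/-- The full initial block set: wall plus the door at `(1,0)`. -/
def B0 : Finset Cell := insert ((1:ℤ),(0:ℤ)) WallS

def Bf1 : Finset Cell := insert ((2:ℤ),(0:ℤ)) WallS
def Bf2 : Finset Cell := insert ((3:ℤ),(0:ℤ)) WallS
def Bf3 : Finset Cell := insert ((4:ℤ),(0:ℤ)) WallS

/-- the One-Way gadget becomes two-way after forward traversal:
`a` is not reachable from `(B, b)`, yet some configuration `(B', b)` reachable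
from `(B, a)` permits returning to `a`. -/
theorem push1_one_way_becomes_two_way :
    ∃ (B : Finset Cell) (a b : Cell), a ∉ B ∧ b ∉ B ∧
      ¬ Push1ReachesCell (B, b) a ∧
      ∃ B' : Finset Cell, Push1Reaches (B, a) (B', b) ∧ Push1ReachesCell (B', b) a := by
  refine ⟨B0, ((0:ℤ),(0:ℤ)), ((3:ℤ),(0:ℤ)), by decide, by decide, ?_, Bf3, ?_, ?_⟩
  · -- a not reachable from (B0, b)
    rintro ⟨B', hr⟩
    have hI : DoorInv (B0, ((3:ℤ),(0:ℤ))) := ⟨by decide, by decide, by decide, by decide⟩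
    exact (doorInv_reaches hr hI).2.2.1 rfl
  · -- forward traversal: push the door out of the tunnel
    have s1 : Push1Step (B0, ((0:ℤ),(0:ℤ))) (Bf1, ((1:ℤ),(0:ℤ))) := by
      refine ⟨(1,0), Or.inl rfl, Or.inr ⟨by decide, by decide, ?_⟩⟩
      refine Prod.ext ?_ (by decide)
      show Bf1 = insert (((0:ℤ),(0:ℤ)) + (1,0) + (1,0)) (B0.erase (((0:ℤ),(0:ℤ)) + (1,0)))
      decide
    have s2 : Push1Step (Bf1, ((1:ℤ),(0:ℤ))) (Bf2, ((2:ℤ),(0:ℤ))) := by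
      refine ⟨(1,0), Or.inl rfl, Or.inr ⟨by decide, by decide, ?_⟩⟩
      refine Prod.ext ?_ (by decide)
      show Bf2 = insert (((1:ℤ),(0:ℤ)) + (1,0) + (1,0)) (Bf1.erase (((1:ℤ),(0:ℤ)) + (1,0)))
      decide
    have s3 : Push1Step (Bf2, ((2:ℤ),(0:ℤ))) (Bf3, ((3:ℤ),(0:ℤ))) := by
      refine ⟨(1,0), Or.inl rfl, Or.inr ⟨by decide, by decide, ?_⟩⟩
      refine Prod.ext ?_ (by decide)
      show Bf3 = insert (((2:ℤ),(0:ℤ)) + (1,0) + (1,0)) (Bf2.erase (((2:ℤ),(0:ℤ)) + (1,0)))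
      decide
    exact Relation.ReflTransGen.head s1 (Relation.ReflTransGen.head s2
      (Relation.ReflTransGen.single s3))
  · -- walk back through the open tunnel
    refine ⟨Bf3, ?_⟩
    have t1 : Push1Step (Bf3, ((3:ℤ),(0:ℤ))) (Bf3, ((2:ℤ),(0:ℤ))) := by
      refine ⟨(-1,0), Or.inr (Or.inl rfl), Or.inl ⟨by decide, ?_⟩⟩
      refine Prod.ext (by decide) ?_
      show ((2:ℤ),(0:ℤ)) = ((3:ℤ),(0:ℤ)) + (-1,0)
      decide
    have t2 : Push1Step (Bf3, ((2:ℤ),(0:ℤ))) (Bf3, ((1:ℤ),(0:ℤ))) := by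
      refine ⟨(-1,0), Or.inr (Or.inl rfl), Or.inl ⟨by decide, ?_⟩⟩
      refine Prod.ext (by decide) ?_
      show ((1:ℤ),(0:ℤ)) = ((2:ℤ),(0:ℤ)) + (-1,0)
      decide
    have t3 : Push1Step (Bf3, ((1:ℤ),(0:ℤ))) (Bf3, ((0:ℤ),(0:ℤ))) := by
      refine ⟨(-1,0), Or.inr (Or.inl rfl), Or.inl ⟨by decide, ?_⟩⟩
      refine Prod.ext (by decide) ?_
      show ((0:ℤ),(0:ℤ)) = ((1:ℤ),(0:ℤ)) + (-1,0)
      decide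
    exact Relation.ReflTransGen.head t1 (Relation.ReflTransGen.head t2
      (Relation.ReflTransGen.single t3))
end

section
/- Fork gadget: there exists a finite Push-1 configuration with block set B and three designated cells a, b, c ∉ B such that b is reachable from (B, a) and c is reachable from (B, a), but no move sequence starting from (B, a) makes the robot occupy b at some point and c at a later point, and no move sequence starting from (B, a) makes the robot occupy c at some point and b at a later point. -/
namespace ForkGadget

/-- The interior "holes" of the wall (free cells plus possible block positions). -/
def holes : Finset Cell :=
  {(0,0),(0,1),(0,2),(-1,0),(-2,0),(1,-1),(0,-1),(1,0)}

/-- The wall: a fat rectangle of blocks minus the interior cells. -/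
noncomputable def W : Finset Cell := (Finset.Icc (-4:ℤ) 3 ×ˢ Finset.Icc (-3:ℤ) 4) \ holes

def dirs : List Cell := [(1,0),(-1,0),(0,1),(0,-1)]

instance : DecidablePred IsDir := fun d => by unfold IsDir; infer_instance

/-- `P` is a set of (block position, robot position) pairs closed under moves
(relative to the fixed wall `W`), and no wall cell can ever be pushed. -/
def Closed (P : Finset (Cell × Cell)) : Prop :=
  ∀ pr ∈ P, pr.1 ∉ W ∧ ∀ d ∈ dirs,
    (pr.2 + d = pr.1 → pr.1 + d ∉ W → (pr.1 + d, pr.1) ∈ P) ∧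
    (pr.2 + d ≠ pr.1 → pr.2 + d ∈ W →
        (pr.2 + d + d ∈ W ∨ pr.2 + d + d = pr.1)) ∧
    (pr.2 + d ≠ pr.1 → pr.2 + d ∉ W → (pr.1, pr.2 + d) ∈ P)

/-- Invariant: the configuration consists of the wall plus one block at `p`,
with `(p, robot)` in the allowed pair set. -/
def Inv (P : Finset (Cell × Cell)) (s : Finset Cell × Cell) : Prop :=
  ∃ p, (p, s.2) ∈ P ∧ s.1 = insert p W

set_option synthInstance.maxSize 2000 in
noncomputable instance (P : Finset (Cell × Cell)) : Decidable (Closed P) := by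
  unfold Closed; infer_instance

lemma dir_mem {d : Cell} (h : IsDir d) : d ∈ dirs := by
  rcases h with h | h | h | h <;> simp [dirs, h]

lemma step_inv {P : Finset (Cell × Cell)} (hP : Closed P)
    {s s' : Finset Cell × Cell} (h : Inv P s) (hs : Push1Step s s') : Inv P s' := by
  obtain ⟨p, hpr, hB⟩ := h
  obtain ⟨d, hd, hcase⟩ := hs
  obtain ⟨hpW, hcl⟩ := hP (p, s.2) hpr
  obtain ⟨c1, c2, c3⟩ := hcl d (dir_mem hd)
  rcases hcase with ⟨hnm, rfl⟩ | ⟨hm, hm2, rfl⟩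
  · rw [hB, Finset.mem_insert] at hnm
    push_neg at hnm
    exact ⟨p, c3 hnm.1 hnm.2, hB⟩
  · rw [hB, Finset.mem_insert] at hm hm2
    push_neg at hm2
    rcases hm with hm | hm
    · -- pushing the movable block
      have hW : p + d ∉ W := by rw [← hm]; exact hm2.2
      refine ⟨p + d, ?_, ?_⟩
      · simpa [hm] using c1 hm hW
      · simp only [hB, hm]
        rw [Finset.erase_insert hpW]
    · -- pushing a wall cell: impossible
      rcases c2 (fun he => hm2.1 (by rw [he] at hm; exact absurd hm hpW)) hm with
        h2 | h2
      · exact absurd h2 hm2.2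
      · exact absurd h2 hm2.1

lemma reach_inv {P : Finset (Cell × Cell)} (hP : Closed P)
    {s s' : Finset Cell × Cell} (h : Inv P s) (hr : Push1Reaches s s') : Inv P s' := by
  induction hr with
  | refl => exact h
  | tail _ hstep ih => exact step_inv hP ih hstep

/- Pair sets. -/
def R0 : Finset Cell := {(1,-1),(0,-1),(1,0)}
def RU1 : Finset Cell := R0 ∪ {(0,0),(-1,0),(-2,0)}
def RU2 : Finset Cell := insert (0,1) RU1
def RL1 : Finset Cell := R0 ∪ {(0,0),(0,1),(0,2)}
def RL2 : Finset Cell := insert (-1,0) RL1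

def PU : Finset (Cell × Cell) :=
  ({((0,1) : Cell)} ×ˢ RU1) ∪ ({((0,2) : Cell)} ×ˢ RU2)
def PL : Finset (Cell × Cell) :=
  ({((-1,0) : Cell)} ×ˢ RL1) ∪ ({((-2,0) : Cell)} ×ˢ RL2)
def PF : Finset (Cell × Cell) :=
  ({((0,0) : Cell)} ×ˢ R0) ∪ PU ∪ PL

lemma closedPF : Closed PF := by decide
lemma closedPU : Closed PU := by decide
lemma closedPL : Closed PL := by decide

/- step helpers -/
lemma mv (B : Finset Cell) (r r' d : Cell) (h1 : IsDir d) (h2 : r' = r + d)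
    (h3 : r' ∉ B) : Push1Step (B, r) (B, r') :=
  ⟨d, h1, Or.inl ⟨h2 ▸ h3, by rw [h2]⟩⟩

lemma pv (B B' : Finset Cell) (r r' d : Cell) (h1 : IsDir d) (h2 : r + d ∈ B)
    (h3 : r + d + d ∉ B) (h4 : r' = r + d)
    (h5 : B' = insert (r + d + d) (B.erase (r + d))) :
    Push1Step (B, r) (B', r') :=
  ⟨d, h1, Or.inr ⟨h2, h3, by rw [h4, h5]⟩⟩

theorem fork :
    ∃ (B : Finset Cell) (a b c : Cell), a ∉ B ∧ b ∉ B ∧ c ∉ B ∧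
      Push1ReachesCell (B, a) b ∧ Push1ReachesCell (B, a) c ∧
      (∀ B' : Finset Cell, Push1Reaches (B, a) (B', b) → ¬ Push1ReachesCell (B', b) c) ∧
      (∀ B' : Finset Cell, Push1Reaches (B, a) (B', c) → ¬ Push1ReachesCell (B', c) b) := by
  refine ⟨insert (0,0) W, (1,-1), (-2,0), (0,2), by decide, by decide, by decide,
    ?_, ?_, ?_, ?_⟩
  · -- reach b = (-2,0): left, push up, left, left
    refine ⟨insert (0,1) W, ?_⟩
    refine Relation.ReflTransGen.head
      (mv _ (1,-1) (0,-1) (-1,0) (by decide) (by decide) (by decide)) ?_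
    refine Relation.ReflTransGen.head
      (pv _ (insert (0,1) W) (0,-1) (0,0) (0,1) (by decide) (by decide) (by decide)
        (by decide) (by decide)) ?_
    refine Relation.ReflTransGen.head
      (mv _ (0,0) (-1,0) (-1,0) (by decide) (by decide) (by decide)) ?_
    exact Relation.ReflTransGen.single
      (mv _ (-1,0) (-2,0) (-1,0) (by decide) (by decide) (by decide))
  · -- reach c = (0,2): up, push left, up, up
    refine ⟨insert (-1,0) W, ?_⟩
    refine Relation.ReflTransGen.head
      (mv _ (1,-1) (1,0) (0,1) (by decide) (by decide) (by decide)) ?_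
    refine Relation.ReflTransGen.head
      (pv _ (insert (-1,0) W) (1,0) (0,0) (-1,0) (by decide) (by decide) (by decide)
        (by decide) (by decide)) ?_
    refine Relation.ReflTransGen.head
      (mv _ (0,0) (0,1) (0,1) (by decide) (by decide) (by decide)) ?_
    exact Relation.ReflTransGen.single
      (mv _ (0,1) (0,2) (0,1) (by decide) (by decide) (by decide))
  · intro B' hr hc
    have h1 : Inv PF (B', (-2,0)) :=
      reach_inv closedPF ⟨(0,0), by decide, rfl⟩ hr
    obtain ⟨p, hp, hB'⟩ := h1
    have hp' : (p, ((-2:ℤ),(0:ℤ))) ∈ PU := by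
      have : ∀ x ∈ PF, x.2 = ((-2:ℤ),(0:ℤ)) → x ∈ PU := by decide
      exact this _ hp rfl
    obtain ⟨B'', hr2⟩ := hc
    have h2 : Inv PU (B'', (0,2)) := reach_inv closedPU ⟨p, hp', hB'⟩ hr2
    obtain ⟨q, hq, -⟩ := h2
    have : ∀ x ∈ PU, x.2 ≠ ((0:ℤ),(2:ℤ)) := by decide
    exact this _ hq rfl
  · intro B' hr hc
    have h1 : Inv PF (B', (0,2)) :=
      reach_inv closedPF ⟨(0,0), by decide, rfl⟩ hr
    obtain ⟨p, hp, hB'⟩ := h1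
    have hp' : (p, ((0:ℤ),(2:ℤ))) ∈ PL := by
      have : ∀ x ∈ PF, x.2 = ((0:ℤ),(2:ℤ)) → x ∈ PL := by decide
      exact this _ hp rfl
    obtain ⟨B'', hr2⟩ := hc
    have h2 : Inv PL (B'', (-2,0)) := reach_inv closedPL ⟨p, hp', hB'⟩ hr2
    obtain ⟨q, hq, -⟩ := h2
    have : ∀ x ∈ PL, x.2 ≠ ((-2:ℤ),(0:ℤ)) := by decide
    exact this _ hq rfl

end ForkGadget

/-- Fork gadget: both `b` and `c` are reachable from `(B, a)`,
but no move sequence from `(B, a)` visits `b` and later `c`, nor `c` and later `b`. -/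
theorem push1_fork_gadget :
    ∃ (B : Finset Cell) (a b c : Cell), a ∉ B ∧ b ∉ B ∧ c ∉ B ∧
      Push1ReachesCell (B, a) b ∧ Push1ReachesCell (B, a) c ∧
      (∀ B' : Finset Cell, Push1Reaches (B, a) (B', b) → ¬ Push1ReachesCell (B', b) c) ∧
      (∀ B' : Finset Cell, Push1Reaches (B, a) (B', c) → ¬ Push1ReachesCell (B', c) b) := by
  exact ForkGadget.fork
end

section
/- H-gadget, mutual exclusion of the two passages: there exists a finite Push-1 configuration with block set B and four designated cells x₀, x₁, y₀, y₁ ∉ B such that x₁ is reachable from (B, x₀), y₁ is reachable from (B, y₀), and moreover: for every configuration (B′, x₁) reachable from (B, x₀), the cell y₁ is not reachable from (B′, y₀); and for every configuration (B′, y₁) reachable from (B, y₀), the cell x₁ is not reachable from (B′, x₀). -/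
/-! ### Auxiliary gadget: a plus-shaped room with one movable block. -/

/-- Wall cells (2-thick ring around the plus-shaped floor; never pushable). -/
def Wls : Finset Cell :=
  {(-4,0), (-3,0), (-2,-2), (-2,-1), (-2,1), (-2,2), (-1,-2), (-1,-1), (-1,1), (-1,2),
   (0,-4), (0,-3), (0,3), (0,4), (1,-2), (1,-1), (1,1), (1,2), (2,-2), (2,-1), (2,1),
   (2,2), (3,0), (4,0)}

/-- Floor cells: a plus shape. -/
def Flr : Finset Cell := {(0,0),(1,0),(2,0),(-1,0),(-2,0),(0,1),(0,2),(0,-1),(0,-2)}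

def Dirs : Finset Cell := {(1,0),(-1,0),(0,1),(0,-1)}

lemma isDir_mem {d : Cell} (h : IsDir d) : d ∈ Dirs := by
  rcases h with h | h | h | h <;> subst h <;> decide

lemma floor_step : ∀ f ∈ Flr, ∀ d ∈ Dirs,
    (f + d ∈ Flr) ∨ (f + d ∈ Wls ∧ f + d + d ∈ Wls) := by decide

lemma flr_not_wls : ∀ x ∈ Flr, x ∉ Wls := by decide

/-- Characterization of a single step from a configuration consisting of the
walls plus one movable block `p`, with the robot on the floor. -/
lemma stepChar {p r : Cell} {c' : Finset Cell × Cell}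
    (hp : p ∈ Flr) (hr : r ∈ Flr)
    (h : Push1Step (insert p Wls, r) c') :
    ∃ d ∈ Dirs, ((r + d ∈ Flr ∧ r + d ≠ p ∧ c' = (insert p Wls, r + d)) ∨
      (r + d = p ∧ p + d ∈ Flr ∧ c' = (insert (p + d) Wls, p))) := by
  obtain ⟨d, hd, hcase⟩ := h
  have hdm : d ∈ Dirs := isDir_mem hd
  refine ⟨d, hdm, ?_⟩
  rcases hcase with ⟨hne, hc⟩ | ⟨hin, hout, hc⟩
  · left
    simp only [Finset.mem_insert, not_or] at hne
    rcases floor_step r hr d hdm with hF | ⟨hW, _⟩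
    · exact ⟨hF, hne.1, hc⟩
    · exact absurd hW hne.2
  · right
    have hdp : r + d = p := by
      rcases Finset.mem_insert.mp hin with h1 | h1
      · exact h1
      · rcases floor_step r hr d hdm with hF | ⟨_, hW2⟩
        · exact absurd h1 (flr_not_wls _ hF)
        · exact absurd (Finset.mem_insert_of_mem hW2) hout
    rw [hdp] at hout hc
    simp only [Finset.mem_insert, not_or] at hout
    have hpF : p + d ∈ Flr := by
      rcases floor_step p hp d hdm with hF | ⟨hW, _⟩
      · exact hF
      · exact absurd hW hout.2
    refine ⟨hdp, hpF, ?_⟩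
    rw [hc, Finset.erase_insert (flr_not_wls p hp)]

/-- Invariant propagation along reachability. -/
lemma inv_reach (good : Cell → Cell → Prop)
    (hb : ∀ p r, good p r → p ∈ Flr ∧ r ∈ Flr)
    (hclose : ∀ p ∈ Flr, ∀ r ∈ Flr, ∀ d ∈ Dirs, good p r →
        (r + d ∈ Flr → r + d ≠ p → good p (r + d)) ∧
        (r + d = p → p + d ∈ Flr → good (p + d) p))
    {p r : Cell} {c₂ : Finset Cell × Cell}
    (h : Push1Reaches (insert p Wls, r) c₂) (hg : good p r) :
    ∃ p₂, c₂ = (insert p₂ Wls, c₂.2) ∧ good p₂ c₂.2 := by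
  induction h with
  | refl => exact ⟨p, rfl, hg⟩
  | @tail b c hab hbc ih =>
    obtain ⟨p₁, heq, hg₁⟩ := ih
    obtain ⟨Bb, rb⟩ := b
    have hB : Bb = insert p₁ Wls := congrArg Prod.fst heq
    subst hB
    have hg₁' : good p₁ rb := hg₁
    obtain ⟨hpF, hrF⟩ := hb _ _ hg₁'
    obtain ⟨d, hdm, hcase⟩ := stepChar hpF hrF hbc
    rcases hcase with ⟨hF, hne, hc⟩ | ⟨hdp, hpF', hc⟩
    · subst hc
      exact ⟨p₁, rfl, ((hclose p₁ hpF rb hrF d hdm hg₁').1 hF hne)⟩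
    · subst hc
      exact ⟨p₁ + d, rfl, ((hclose p₁ hpF rb hrF d hdm hg₁').2 hdp hpF')⟩

/-- Invariant for the x-traversal phase. -/
def GoodX (p r : Cell) : Prop :=
  p ∈ Flr ∧ r ∈ Flr ∧
    ((p = (0,0) ∧ (r = (0,-1) ∨ r = (0,-2))) ∨
     ((p = (0,1) ∨ p = (0,2)) ∧ r ≠ p ∧ r ≠ (0,2)))

/-- Invariant: block sealed in north arm; robot never at `(0,2)`. -/
def GoodN (p r : Cell) : Prop :=
  p ∈ Flr ∧ r ∈ Flr ∧ (p = (0,1) ∨ p = (0,2)) ∧ r ≠ p ∧ r ≠ (0,2)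

/-- Invariant for the y-traversal phase. -/
def GoodY (p r : Cell) : Prop :=
  p ∈ Flr ∧ r ∈ Flr ∧
    ((p = (0,0) ∧ (r = (-1,0) ∨ r = (-2,0))) ∨
     ((p = (1,0) ∨ p = (2,0)) ∧ r ≠ p ∧ r ≠ (2,0)))

/-- Invariant: block sealed in east arm; robot never at `(2,0)`. -/
def GoodE (p r : Cell) : Prop :=
  p ∈ Flr ∧ r ∈ Flr ∧ (p = (1,0) ∨ p = (2,0)) ∧ r ≠ p ∧ r ≠ (2,0)

instance (p r : Cell) : Decidable (GoodX p r) := by unfold GoodX; infer_instance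
instance (p r : Cell) : Decidable (GoodN p r) := by unfold GoodN; infer_instance
instance (p r : Cell) : Decidable (GoodY p r) := by unfold GoodY; infer_instance
instance (p r : Cell) : Decidable (GoodE p r) := by unfold GoodE; infer_instance

lemma closeX : ∀ p ∈ Flr, ∀ r ∈ Flr, ∀ d ∈ Dirs, GoodX p r →
    (r + d ∈ Flr → r + d ≠ p → GoodX p (r + d)) ∧
    (r + d = p → p + d ∈ Flr → GoodX (p + d) p) := by decide

lemma closeN : ∀ p ∈ Flr, ∀ r ∈ Flr, ∀ d ∈ Dirs, GoodN p r →
    (r + d ∈ Flr → r + d ≠ p → GoodN p (r + d)) ∧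
    (r + d = p → p + d ∈ Flr → GoodN (p + d) p) := by decide

lemma closeY : ∀ p ∈ Flr, ∀ r ∈ Flr, ∀ d ∈ Dirs, GoodY p r →
    (r + d ∈ Flr → r + d ≠ p → GoodY p (r + d)) ∧
    (r + d = p → p + d ∈ Flr → GoodY (p + d) p) := by decide

lemma closeE : ∀ p ∈ Flr, ∀ r ∈ Flr, ∀ d ∈ Dirs, GoodE p r →
    (r + d ∈ Flr → r + d ≠ p → GoodE p (r + d)) ∧
    (r + d = p → p + d ∈ Flr → GoodE (p + d) p) := by decide

/-- H-gadget, mutual exclusion of the two passages. -/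
theorem push1_H_gadget_xor :
    ∃ (B : Finset Cell) (x₀ x₁ y₀ y₁ : Cell),
      x₀ ∉ B ∧ x₁ ∉ B ∧ y₀ ∉ B ∧ y₁ ∉ B ∧
      Push1ReachesCell (B, x₀) x₁ ∧ Push1ReachesCell (B, y₀) y₁ ∧
      (∀ B' : Finset Cell, Push1Reaches (B, x₀) (B', x₁) → ¬ Push1ReachesCell (B', y₀) y₁) ∧
      (∀ B' : Finset Cell, Push1Reaches (B, y₀) (B', y₁) → ¬ Push1ReachesCell (B', x₀) x₁) := by
  refine ⟨insert (0,0) Wls, (0,-2), (2,0), (-2,0), (0,2), by decide, by decide, by decide,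
    by decide, ?_, ?_, ?_, ?_⟩
  · -- x-passage is traversable
    refine ⟨insert (0,1) Wls, ?_⟩
    have s1 : Push1Step (insert ((0:ℤ),(0:ℤ)) Wls, ((0:ℤ),(-2:ℤ)))
        (insert ((0:ℤ),(0:ℤ)) Wls, ((0:ℤ),(-1:ℤ))) :=
      ⟨(0,1), Or.inr (Or.inr (Or.inl rfl)), Or.inl (by decide)⟩
    have s2 : Push1Step (insert ((0:ℤ),(0:ℤ)) Wls, ((0:ℤ),(-1:ℤ)))
        (insert ((0:ℤ),(1:ℤ)) Wls, ((0:ℤ),(0:ℤ))) :=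
      ⟨(0,1), Or.inr (Or.inr (Or.inl rfl)), Or.inr (by decide)⟩
    have s3 : Push1Step (insert ((0:ℤ),(1:ℤ)) Wls, ((0:ℤ),(0:ℤ)))
        (insert ((0:ℤ),(1:ℤ)) Wls, ((1:ℤ),(0:ℤ))) :=
      ⟨(1,0), Or.inl rfl, Or.inl (by decide)⟩
    have s4 : Push1Step (insert ((0:ℤ),(1:ℤ)) Wls, ((1:ℤ),(0:ℤ)))
        (insert ((0:ℤ),(1:ℤ)) Wls, ((2:ℤ),(0:ℤ))) :=
      ⟨(1,0), Or.inl rfl, Or.inl (by decide)⟩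
    exact Relation.ReflTransGen.head s1 (Relation.ReflTransGen.head s2
      (Relation.ReflTransGen.head s3 (Relation.ReflTransGen.single s4)))
  · -- y-passage is traversable
    refine ⟨insert (1,0) Wls, ?_⟩
    have s1 : Push1Step (insert ((0:ℤ),(0:ℤ)) Wls, ((-2:ℤ),(0:ℤ)))
        (insert ((0:ℤ),(0:ℤ)) Wls, ((-1:ℤ),(0:ℤ))) :=
      ⟨(1,0), Or.inl rfl, Or.inl (by decide)⟩
    have s2 : Push1Step (insert ((0:ℤ),(0:ℤ)) Wls, ((-1:ℤ),(0:ℤ)))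
        (insert ((1:ℤ),(0:ℤ)) Wls, ((0:ℤ),(0:ℤ))) :=
      ⟨(1,0), Or.inl rfl, Or.inr (by decide)⟩
    have s3 : Push1Step (insert ((1:ℤ),(0:ℤ)) Wls, ((0:ℤ),(0:ℤ)))
        (insert ((1:ℤ),(0:ℤ)) Wls, ((0:ℤ),(1:ℤ))) :=
      ⟨(0,1), Or.inr (Or.inr (Or.inl rfl)), Or.inl (by decide)⟩
    have s4 : Push1Step (insert ((1:ℤ),(0:ℤ)) Wls, ((0:ℤ),(1:ℤ)))
        (insert ((1:ℤ),(0:ℤ)) Wls, ((0:ℤ),(2:ℤ))) :=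
      ⟨(0,1), Or.inr (Or.inr (Or.inl rfl)), Or.inl (by decide)⟩
    exact Relation.ReflTransGen.head s1 (Relation.ReflTransGen.head s2
      (Relation.ReflTransGen.head s3 (Relation.ReflTransGen.single s4)))
  · -- after an x-traversal, the y-passage is sealed
    rintro B' hreach ⟨B'', hr2⟩
    obtain ⟨p₂, heq, hg⟩ := inv_reach GoodX (fun p r h => ⟨h.1, h.2.1⟩) closeX hreach
      (by decide)
    have hB' : B' = insert p₂ Wls := congrArg Prod.fst heq
    have hgN : GoodN p₂ ((-2:ℤ),(0:ℤ)) := by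
      have : ∀ p ∈ Flr, GoodX p ((2:ℤ),(0:ℤ)) → GoodN p ((-2:ℤ),(0:ℤ)) := by decide
      exact this p₂ hg.1 hg
    rw [hB'] at hr2
    obtain ⟨p₃, _, hg₃⟩ := inv_reach GoodN (fun p r h => ⟨h.1, h.2.1⟩) closeN hr2 hgN
    exact hg₃.2.2.2.2 rfl
  · -- after a y-traversal, the x-passage is sealed
    rintro B' hreach ⟨B'', hr2⟩
    obtain ⟨p₂, heq, hg⟩ := inv_reach GoodY (fun p r h => ⟨h.1, h.2.1⟩) closeY hreach
      (by decide)
    have hB' : B' = insert p₂ Wls := congrArg Prod.fst heq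
    have hgE : GoodE p₂ ((0:ℤ),(-2:ℤ)) := by
      have : ∀ p ∈ Flr, GoodY p ((0:ℤ),(2:ℤ)) → GoodE p ((0:ℤ),(-2:ℤ)) := by decide
      exact this p₂ hg.1 hg
    rw [hB'] at hr2
    obtain ⟨p₃, _, hg₃⟩ := inv_reach GoodE (fun p r h => ⟨h.1, h.2.1⟩) closeE hr2 hgE
    exact hg₃.2.2.2.2 rfl
end
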